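/- arXiv:1202.0093 — 6 statements merged into one kernel-verified Lean document; each statement's English description precedes it below -/
import Mathlib

section
/- For γ > 1 and α = (γ-1)/2, the map x ↦ √((1 - x^{-1/α})(x^{γ/α} - 1)) is convex on the interval [1, ∞). -/
open Real Set Filter Topology

/-- κ = √γ / α with α = (γ-1)/2. -/
noncomputable def kappa (γ : ℝ) : ℝ := Real.sqrt γ / ((γ - 1) / 2)

/-- The shock branch x ↦ √((1 - x^{-1/α})(x^{γ/α} - 1)), α = (γ-1)/2. -/
noncomputable def shockPart (γ : ℝ) (x : ℝ) : ℝ :=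
  Real.sqrt ((1 - x ^ (-(1 : ℝ) / ((γ - 1) / 2))) * (x ^ (γ / ((γ - 1) / 2)) - 1))

/-- Backward auxiliary function φ← : rarefaction branch κ(x-1) for x ≤ 1,
    shock branch for x ≥ 1 (they agree, with value 0, at x = 1). -/
noncomputable def phiB (γ : ℝ) (x : ℝ) : ℝ :=
  if x ≤ 1 then kappa γ * (x - 1) else shockPart γ x

/-- Forward auxiliary function φ→ : shock branch -√(...) for x ≤ 1,
    rarefaction branch κ(x-1) for x ≥ 1 (they agree, with value 0, at x = 1). -/
noncomputable def phiF (γ : ℝ) (x : ℝ) : ℝ :=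
  if x < 1 then -shockPart γ x else kappa γ * (x - 1)

/-!
Write `a = 1/α = 2/(γ-1)`, so that for `x > 0` the radicand is
`G x = (1 - x^(-a)) (x^(a+2) - 1) = x^(a+2) - x^2 - 1 + x^(-a)`.
Since `(√G)'' = (2 G G'' - G'^2) / (4 G^(3/2))`, it suffices that `H = 2 G G'' - G'^2 ≥ 0` on
`[1, ∞)`. Now `H' = 2 G G'''` with `G''' x = a (a+1) (a+2) (x^(a-1) - x^(-a-3)) ≥ 0` for `x ≥ 1`,
and `H 1 = 0` because `G 1 = G' 1 = 0`; so `H` is monotone and nonnegative.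
-/

lemma convexOn_sqrt_of_hasDerivAt {D : Set ℝ} (hD : Convex ℝ D) {g g' g'' : ℝ → ℝ}
    (hg : ContinuousOn g D) (hg' : ∀ x ∈ interior D, HasDerivAt g (g' x) x)
    (hg'' : ∀ x ∈ interior D, HasDerivAt g' (g'' x) x) (hpos : ∀ x ∈ interior D, 0 < g x)
    (hH : ∀ x ∈ interior D, 0 ≤ 2 * g x * g'' x - g' x ^ 2) :
    ConvexOn ℝ D (fun x => √(g x)) := by
  have hsqrt' : ∀ x ∈ interior D,
      HasDerivAt (fun y => √(g y)) (g' x / (2 * √(g x))) x :=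
    fun x hx => (hg' x hx).sqrt (hpos x hx).ne'
  refine convexOn_of_hasDerivWithinAt2_nonneg hD (continuous_sqrt.comp_continuousOn hg)
    (fun x hx => (hsqrt' x hx).hasDerivWithinAt)
    (f'' := fun x => (2 * g x * g'' x - g' x ^ 2) / (4 * g x * √(g x))) ?_ ?_
  · intro x hx
    have hgx := hpos x hx
    have hs : 0 < √(g x) := sqrt_pos.2 hgx
    have hquot := (hg'' x hx).div ((hsqrt' x hx).const_mul 2) (by positivity)
    refine (hquot.congr_deriv ?_).hasDerivWithinAt
    have hsq : √(g x) ^ 2 = g x := sq_sqrt hgx.le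
    field_simp
    rw [hsq]
    ring
  · intro x hx
    have hgx := hpos x hx
    exact div_nonneg (hH x hx) (by positivity)

lemma two_mul_mul_sub_sq_nonneg_of_deriv3_nonneg {b : ℝ} {g g' g'' g''' : ℝ → ℝ}
    (hg : ∀ x ∈ Ici b, HasDerivAt g (g' x) x) (hg' : ∀ x ∈ Ici b, HasDerivAt g' (g'' x) x)
    (hg'' : ∀ x ∈ Ici b, HasDerivAt g'' (g''' x) x) (hb : g b = 0) (hb' : g' b = 0)
    (hnonneg : ∀ x ∈ Ioi b, 0 ≤ g x) (h3 : ∀ x ∈ Ioi b, 0 ≤ g''' x) {x : ℝ} (hx : b ≤ x) :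
    0 ≤ 2 * g x * g'' x - g' x ^ 2 := by
  have hH : ∀ x ∈ Ici b, HasDerivAt (fun y => 2 * g y * g'' y - g' y ^ 2)
      (2 * g x * g''' x) x := fun x hx => by
    refine ((((hg x hx).const_mul 2).mul (hg'' x hx)).sub ((hg' x hx).pow 2)).congr_deriv ?_
    push_cast
    ring
  have hmono : MonotoneOn (fun y => 2 * g y * g'' y - g' y ^ 2) (Ici b) := by
    refine monotoneOn_of_hasDerivWithinAt_nonneg (convex_Ici b)
      (fun y hy => (hH y hy).continuousAt.continuousWithinAt)
      (fun y hy => (hH y (interior_subset hy)).hasDerivWithinAt) fun y hy => ?_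
    rw [interior_Ici] at hy
    have := mul_nonneg (hnonneg y hy) (h3 y hy)
    linarith
  simpa [hb, hb'] using hmono self_mem_Ici hx hx

noncomputable def shockRadicand (a x : ℝ) : ℝ := x ^ (a + 2) - x ^ 2 - 1 + x ^ (-a)

section ShockRadicand

variable {a x : ℝ}

lemma mul_eq_shockRadicand (hx : 0 < x) :
    (1 - x ^ (-a)) * (x ^ (a + 2) - 1) = shockRadicand a x := by
  have h : x ^ (-a) * x ^ (a + 2) = x ^ 2 := by
    rw [← rpow_add hx, show -a + (a + 2) = 2 by ring, rpow_two]
  rw [shockRadicand]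
  linear_combination -h

lemma shockRadicand_pos (ha : 0 < a) (hx : 1 < x) : 0 < shockRadicand a x := by
  rw [← mul_eq_shockRadicand (by linarith)]
  have h1 : x ^ (-a) < 1 := rpow_lt_one_of_one_lt_of_neg hx (by linarith)
  have h2 : 1 < x ^ (a + 2) := one_lt_rpow hx (by linarith)
  exact mul_pos (by linarith) (by linarith)

lemma hasDerivAt_shockRadicand (hx : 0 < x) :
    HasDerivAt (shockRadicand a) ((a + 2) * x ^ (a + 1) - 2 * x - a * x ^ (-a - 1)) x := by
  have := (((hasDerivAt_rpow_const (p := a + 2) (Or.inl hx.ne')).sub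
    (hasDerivAt_pow 2 x)).sub_const 1).add (hasDerivAt_rpow_const (p := -a) (Or.inl hx.ne'))
  refine this.congr_deriv ?_
  ring_nf

lemma hasDerivAt_shockRadicand_deriv (hx : 0 < x) :
    HasDerivAt (fun y => (a + 2) * y ^ (a + 1) - 2 * y - a * y ^ (-a - 1))
      ((a + 2) * (a + 1) * x ^ a - 2 + a * (a + 1) * x ^ (-a - 2)) x := by
  have := (((hasDerivAt_rpow_const (p := a + 1) (Or.inl hx.ne')).const_mul (a + 2)).sub
    ((hasDerivAt_id x).const_mul 2)).sub
    ((hasDerivAt_rpow_const (p := -a - 1) (Or.inl hx.ne')).const_mul a)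
  refine this.congr_deriv ?_
  ring_nf

lemma hasDerivAt_shockRadicand_deriv2 (hx : 0 < x) :
    HasDerivAt (fun y => (a + 2) * (a + 1) * y ^ a - 2 + a * (a + 1) * y ^ (-a - 2))
      (a * (a + 1) * (a + 2) * (x ^ (a - 1) - x ^ (-a - 3))) x := by
  have := (((hasDerivAt_rpow_const (p := a) (Or.inl hx.ne')).const_mul
    ((a + 2) * (a + 1))).sub_const 2).add
    ((hasDerivAt_rpow_const (p := -a - 2) (Or.inl hx.ne')).const_mul (a * (a + 1)))
  refine this.congr_deriv ?_
  ring_nf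

lemma two_mul_shockRadicand_mul_deriv2_sub_sq_nonneg (ha : 0 < a) (hx : 1 ≤ x) :
    0 ≤ 2 * shockRadicand a x * ((a + 2) * (a + 1) * x ^ a - 2 + a * (a + 1) * x ^ (-a - 2))
      - ((a + 2) * x ^ (a + 1) - 2 * x - a * x ^ (-a - 1)) ^ 2 := by
  have hpos : ∀ y ∈ Ici (1 : ℝ), 0 < y := fun y hy => zero_lt_one.trans_le hy
  refine two_mul_mul_sub_sq_nonneg_of_deriv3_nonneg
    (fun y hy => hasDerivAt_shockRadicand (hpos y hy))
    (fun y hy => hasDerivAt_shockRadicand_deriv (hpos y hy))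
    (fun y hy => hasDerivAt_shockRadicand_deriv2 (hpos y hy))
    (by simp [shockRadicand]) (by norm_num) (fun y hy => (shockRadicand_pos ha hy).le)
    (fun y hy => ?_) hx
  have : y ^ (-a - 3) ≤ y ^ (a - 1) := rpow_le_rpow_of_exponent_le (le_of_lt hy) (by linarith)
  have : 0 ≤ y ^ (a - 1) - y ^ (-a - 3) := by linarith
  positivity

lemma convexOn_sqrt_shockRadicand (ha : 0 < a) :
    ConvexOn ℝ (Ici 1) fun x => √(shockRadicand a x) := by
  have hpos : ∀ y ∈ Ici (1 : ℝ), 0 < y := fun y hy => zero_lt_one.trans_le hy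
  refine convexOn_sqrt_of_hasDerivAt (convex_Ici 1)
    (fun y hy => (hasDerivAt_shockRadicand (hpos y hy)).continuousAt.continuousWithinAt)
    (fun y hy => hasDerivAt_shockRadicand (hpos y (interior_subset hy)))
    (fun y hy => hasDerivAt_shockRadicand_deriv (hpos y (interior_subset hy)))
    (fun y hy => ?_)
    (fun y hy => two_mul_shockRadicand_mul_deriv2_sub_sq_nonneg ha (interior_subset hy))
  rw [interior_Ici] at hy
  exact shockRadicand_pos ha hy

end ShockRadicand

/-- the shock branch is convex on [1, ∞). -/
theorem shockPart_convexOn (γ : ℝ) (hγ : 1 < γ) :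
    ConvexOn ℝ (Set.Ici (1 : ℝ)) (shockPart γ) := by
  have hγ1 : γ - 1 ≠ 0 := by linarith
  have ha : 0 < 2 / (γ - 1) := div_pos two_pos (by linarith)
  have hneg : -(1 : ℝ) / ((γ - 1) / 2) = -(2 / (γ - 1)) := by field_simp
  have hpos : γ / ((γ - 1) / 2) = 2 / (γ - 1) + 2 := by field_simp; ring
  refine (convexOn_sqrt_shockRadicand ha).congr fun x hx => ?_
  rw [shockPart, hneg, hpos, mul_eq_shockRadicand (zero_lt_one.trans_le hx)]
end

section
/- The backward auxiliary function φ← is convex on (0,∞) and the forward auxiliary function φ→ is concave on (0,∞). -/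
open Real Set Filter Topology

/-! With `a = 1/α = 2/(γ-1)` the shock branch is `√g` for `g(x) = (1 - x^{-a})(x^{a+2} - 1)`,
and `κ = √(a(a+2))`. On `(1,∞)` the derivative `g'/(2√g)` of `√g` is nondecreasing, since
`x²(2gg'' - g'²)` is a product of two factors that are nonnegative by the weighted AM-GM inequality
`p y^q + q y^{-p} ≥ p + q`, and it is at least `κ`, since `x²(g'² - 4κ²g)` is a square. Both
factors `g₁, g₂` of `g` vanish at `1`, so the slope of `√g = √(g₁g₂)` at `1⁺` tends to
`√(g₁'(1) g₂'(1)) = κ`. Hence `φ←` is differentiable with nondecreasing derivative, so convex.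

The symmetry `g(1/x) = g(x)/x²` gives `φ→(x) = -x φ←(1/x)`, and the perspective `x ↦ x f(1/x)` of
a convex function `f` on `(0,∞)` is convex, so `φ→` is concave. -/

theorem add_le_mul_rpow_add_mul_rpow_neg {p q y : ℝ} (hp : 0 ≤ p) (hq : 0 ≤ q) (hy : 0 < y) :
    p + q ≤ p * y ^ q + q * y ^ (-p) := by
  have hexp (r : ℝ) : 1 + log y * r ≤ y ^ r := by
    rw [rpow_def_of_pos hy]; linarith [add_one_le_exp (log y * r)]
  linear_combination p * hexp q + q * hexp (-p)

theorem hasDerivWithinAt_sqrt_mul_Ici {p q : ℝ → ℝ} {p' q' c : ℝ} (hp : HasDerivAt p p' c)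
    (hq : HasDerivAt q q' c) (hpc : p c = 0) (hqc : q c = 0) :
    HasDerivWithinAt (fun x => √(p x * q x)) √(p' * q') (Ici c) c := by
  rw [hasDerivWithinAt_iff_tendsto_slope, Ici_sdiff_left]
  have hslope := ((hasDerivAt_iff_tendsto_slope.1 hp).mul
    (hasDerivAt_iff_tendsto_slope.1 hq)).mono_left (nhdsWithin_mono c fun x (hx : c < x) => hx.ne')
  refine ((continuous_sqrt.tendsto _).comp hslope).congr' ?_
  filter_upwards [self_mem_nhdsWithin] with x (hx : c < x)
  simp only [Function.comp, slope_def_field, hpc, hqc, sub_zero, mul_zero, sqrt_zero]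
  rw [div_mul_div_comm, sqrt_div' _ (mul_self_nonneg _), sqrt_mul_self (sub_pos.2 hx).le]

theorem ConvexOn.mul_comp_inv {f : ℝ → ℝ} (hf : ConvexOn ℝ (Ioi 0) f) :
    ConvexOn ℝ (Ioi 0) (fun x => x * f x⁻¹) := by
  refine ⟨convex_Ioi 0, fun x (hx : 0 < x) y (hy : 0 < y) μ ν hμ hν hμν => ?_⟩
  have hz : 0 < μ • x + ν • y := convex_Ioi (0 : ℝ) hx hy hμ hν hμν
  simp only [smul_eq_mul] at hz ⊢
  set z := μ * x + ν * y
  have hmid : (μ * x / z) • x⁻¹ + (ν * y / z) • y⁻¹ = z⁻¹ := by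
    simp only [smul_eq_mul, z]; field_simp; rw [hμν]
  have hconv := hf.2 (inv_pos.2 hx) (inv_pos.2 hy) (by positivity : 0 ≤ μ * x / z)
    (by positivity : 0 ≤ ν * y / z) (by rw [← add_div, div_self hz.ne'])
  rw [hmid, smul_eq_mul, smul_eq_mul] at hconv
  calc z * f z⁻¹ ≤ z * (μ * x / z * f x⁻¹ + ν * y / z * f y⁻¹) := by gcongr
    _ = μ * (x * f x⁻¹) + ν * (y * f y⁻¹) := by field_simp

-- `g` written through `u = x ^ a`, so that its identities are rational identities in `u` and `x`.
noncomputable def shockSq (a x : ℝ) : ℝ := (1 - (x ^ a)⁻¹) * (x ^ a * x ^ 2 - 1)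

noncomputable def shockSqDeriv (a x : ℝ) : ℝ := (a + 2) * x ^ a * x - a * (x ^ a)⁻¹ * x⁻¹ - 2 * x

noncomputable def shockSqDeriv2 (a x : ℝ) : ℝ :=
  (a + 2) * (a + 1) * x ^ a + a * (a + 1) * (x ^ a)⁻¹ * (x ^ 2)⁻¹ - 2

section

variable {a x : ℝ}

theorem hasDerivAt_rpow_const_of_pos (hx : 0 < x) :
    HasDerivAt (fun y : ℝ => y ^ a) (a * x ^ a / x) x := by
  simpa [rpow_sub_one hx.ne', mul_div_assoc] using hasDerivAt_rpow_const (p := a) (Or.inl hx.ne')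

theorem hasDerivAt_shockSq (hx : 0 < x) : HasDerivAt (shockSq a) (shockSqDeriv a x) x := by
  have hu := hasDerivAt_rpow_const_of_pos (a := a) hx
  have hu0 : x ^ a ≠ 0 := (rpow_pos_of_pos hx a).ne'
  refine (((hu.inv hu0).const_sub 1).mul ((hu.mul (hasDerivAt_pow 2 x)).sub_const 1)).congr_deriv ?_
  simp only [shockSqDeriv, Pi.mul_apply, Pi.inv_apply]; field_simp; ring

theorem hasDerivAt_shockSqDeriv (hx : 0 < x) :
    HasDerivAt (shockSqDeriv a) (shockSqDeriv2 a x) x := by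
  have hu := hasDerivAt_rpow_const_of_pos (a := a) hx
  have hu0 : x ^ a ≠ 0 := (rpow_pos_of_pos hx a).ne'
  refine ((((hu.const_mul (a + 2)).mul (hasDerivAt_id' x)).sub
    (((hu.inv hu0).const_mul a).mul (hasDerivAt_inv hx.ne'))).sub
    ((hasDerivAt_id' x).const_mul 2)).congr_deriv ?_
  simp only [shockSqDeriv2, Pi.inv_apply]; field_simp; ring

theorem shockSq_one : shockSq a 1 = 0 := by simp [shockSq]

theorem shockSq_pos (ha : 0 < a) (hx : 1 < x) : 0 < shockSq a x := by
  have hu : 1 < x ^ a := one_lt_rpow hx ha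
  have hx2 : 1 < x ^ 2 := one_lt_pow₀ hx two_ne_zero
  exact mul_pos (sub_pos.2 (inv_lt_one_of_one_lt₀ hu))
    (sub_pos.2 (one_lt_mul_of_lt_of_le hu hx2.le))

theorem shockSq_inv (hx : 0 < x) : shockSq a x⁻¹ = shockSq a x / x ^ 2 := by
  have hu0 : x ^ a ≠ 0 := (rpow_pos_of_pos hx a).ne'
  unfold shockSq; rw [inv_rpow hx.le]; field_simp; ring

theorem four_mul_shockSq_le_sq_shockSqDeriv (hx : 0 < x) :
    4 * (a * (a + 2)) * shockSq a x ≤ shockSqDeriv a x ^ 2 := by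
  have hu0 : x ^ a ≠ 0 := (rpow_pos_of_pos hx a).ne'
  have h : shockSqDeriv a x ^ 2 - 4 * (a * (a + 2)) * shockSq a x
      = (((a + 2) * x ^ a * x ^ 2 + a * (x ^ a)⁻¹ - (2 * a + 2) * x ^ 2) / x) ^ 2 := by
    unfold shockSqDeriv shockSq; field_simp; ring
  nlinarith [sq_nonneg (((a + 2) * x ^ a * x ^ 2 + a * (x ^ a)⁻¹ - (2 * a + 2) * x ^ 2) / x)]

theorem sq_shockSqDeriv_le (ha : 0 ≤ a) (hx : 0 < x) :
    shockSqDeriv a x ^ 2 ≤ 2 * shockSq a x * shockSqDeriv2 a x := by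
  have hu0 : x ^ a ≠ 0 := (rpow_pos_of_pos hx a).ne'
  have hW := add_le_mul_rpow_add_mul_rpow_neg ha (by linarith : 0 ≤ a + 2) hx
  have hF := add_le_mul_rpow_add_mul_rpow_neg (by linarith : 0 ≤ a + 2) ha hx
  rw [rpow_add hx, rpow_two, rpow_neg hx.le] at hW
  rw [neg_add, rpow_add hx, rpow_neg hx.le, rpow_neg hx.le, rpow_two] at hF
  have h : 2 * shockSq a x * shockSqDeriv2 a x - shockSqDeriv a x ^ 2
      = (a * (x ^ a * x ^ 2) + (a + 2) * (x ^ a)⁻¹ - (a + (a + 2)))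
        * ((a + 2) * x ^ a + a * ((x ^ a)⁻¹ * (x ^ 2)⁻¹) - (a + 2 + a)) := by
    unfold shockSqDeriv shockSqDeriv2 shockSq; field_simp; ring
  nlinarith [mul_nonneg (sub_nonneg.2 hW) (sub_nonneg.2 hF)]

theorem shockSqDeriv_nonneg (ha : 0 ≤ a) (hx : 1 ≤ x) : 0 ≤ shockSqDeriv a x := by
  have hx0 : 0 < x := by linarith
  have hu : 1 ≤ x ^ a := one_le_rpow hx ha
  have hux : (x ^ a)⁻¹ * x⁻¹ ≤ 1 := by
    rw [← mul_inv]; exact inv_le_one_of_one_le₀ (by nlinarith)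
  unfold shockSqDeriv
  nlinarith [mul_le_mul_of_nonneg_right hu hx0.le, mul_le_mul_of_nonneg_left hux ha]

noncomputable def shockBranchDeriv (a x : ℝ) : ℝ := shockSqDeriv a x / (2 * √(shockSq a x))

theorem hasDerivAt_sqrt_shockSq (ha : 0 < a) (hx : 1 < x) :
    HasDerivAt (fun y => √(shockSq a y)) (shockBranchDeriv a x) x :=
  (hasDerivAt_shockSq (by linarith)).sqrt (shockSq_pos ha hx).ne'

theorem hasDerivWithinAt_sqrt_shockSq_one :
    HasDerivWithinAt (fun y => √(shockSq a y)) √(a * (a + 2)) (Ici 1) 1 := by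
  have hu := hasDerivAt_rpow_const_of_pos (a := a) one_pos
  have hp : HasDerivAt (fun y : ℝ => 1 - (y ^ a)⁻¹) a 1 := by
    simpa using (hu.inv (by simp)).const_sub 1
  have hq : HasDerivAt (fun y : ℝ => y ^ a * y ^ 2 - 1) (a + 2) 1 :=
    ((hu.mul (hasDerivAt_pow 2 1)).sub_const 1).congr_deriv (by norm_num)
  exact hasDerivWithinAt_sqrt_mul_Ici hp hq (by simp) (by simp)

theorem sqrt_mul_le_shockBranchDeriv (ha : 0 < a) (hx : 1 < x) :
    √(a * (a + 2)) ≤ shockBranchDeriv a x := by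
  have hg := shockSq_pos ha hx
  rw [shockBranchDeriv, le_div_iff₀ (by positivity)]
  calc √(a * (a + 2)) * (2 * √(shockSq a x)) = √(4 * (a * (a + 2)) * shockSq a x) := by
        rw [show (4 : ℝ) = 2 ^ 2 by norm_num, sqrt_mul' _ hg.le,
          sqrt_mul (by norm_num : (0 : ℝ) ≤ 2 ^ 2), sqrt_sq zero_le_two]; ring
    _ ≤ √(shockSqDeriv a x ^ 2) := sqrt_le_sqrt (four_mul_shockSq_le_sq_shockSqDeriv (by linarith))
    _ = shockSqDeriv a x := sqrt_sq (shockSqDeriv_nonneg ha.le hx.le)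

theorem monotoneOn_shockBranchDeriv (ha : 0 < a) : MonotoneOn (shockBranchDeriv a) (Ioi 1) := by
  have hderiv (x : ℝ) (hx : 1 < x) := (hasDerivAt_shockSqDeriv (a := a) (by linarith)).div
    ((hasDerivAt_sqrt_shockSq ha hx).const_mul 2) (by positivity [shockSq_pos ha hx])
  refine monotoneOn_of_hasDerivWithinAt_nonneg (convex_Ioi 1)
    (fun x hx => (hderiv x hx).continuousAt.continuousWithinAt)
    (fun x hx => (hderiv x (by simpa using hx)).hasDerivWithinAt) (fun x hx => ?_)
  rw [interior_Ioi] at hx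
  have hg := shockSq_pos ha hx
  have hs : √(shockSq a x) ^ 2 = shockSq a x := sq_sqrt hg.le
  have hsq := sq_shockSqDeriv_le ha.le (zero_lt_one.trans hx)
  apply div_nonneg _ (sq_nonneg _)
  rw [shockBranchDeriv]
  field_simp
  nlinarith

end

noncomputable def backwardAux (a x : ℝ) : ℝ :=
  if x ≤ 1 then √(a * (a + 2)) * (x - 1) else √(shockSq a x)

noncomputable def backwardAuxDeriv (a x : ℝ) : ℝ :=
  if x ≤ 1 then √(a * (a + 2)) else shockBranchDeriv a x

section

variable {a : ℝ}

theorem backwardAux_of_one_le {x : ℝ} (hx : 1 ≤ x) : backwardAux a x = √(shockSq a x) := by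
  rcases hx.eq_or_lt with rfl | hx
  · simp [backwardAux, shockSq_one]
  · exact if_neg hx.not_ge

theorem hasDerivAt_backwardAux (ha : 0 < a) (x : ℝ) :
    HasDerivAt (backwardAux a) (backwardAuxDeriv a x) x := by
  have hline (x : ℝ) : HasDerivAt (fun y => √(a * (a + 2)) * (y - 1)) √(a * (a + 2)) x := by
    simpa using ((hasDerivAt_id x).sub_const 1).const_mul √(a * (a + 2))
  rcases lt_trichotomy x 1 with hx | rfl | hx
  · rw [backwardAuxDeriv, if_pos hx.le]
    refine (hline x).congr_of_eventuallyEq ?_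
    filter_upwards [Iio_mem_nhds hx] with y hy
    exact if_pos hy.le
  · rw [backwardAuxDeriv, if_pos le_rfl]
    have hleft : HasDerivWithinAt (backwardAux a) √(a * (a + 2)) (Iic 1) 1 :=
      (hline 1).hasDerivWithinAt.congr (fun y hy => if_pos hy) (if_pos le_rfl)
    have hright : HasDerivWithinAt (backwardAux a) √(a * (a + 2)) (Ici 1) 1 :=
      hasDerivWithinAt_sqrt_shockSq_one.congr (fun y hy => backwardAux_of_one_le hy)
        (backwardAux_of_one_le le_rfl)
    simpa [Iic_union_Ici, hasDerivWithinAt_univ] using hleft.union hright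
  · rw [backwardAuxDeriv, if_neg hx.not_ge]
    refine (hasDerivAt_sqrt_shockSq ha hx).congr_of_eventuallyEq ?_
    filter_upwards [Ioi_mem_nhds hx] with y hy
    exact backwardAux_of_one_le hy.le

theorem monotone_backwardAuxDeriv (ha : 0 < a) : Monotone (backwardAuxDeriv a) := by
  intro x y hxy
  unfold backwardAuxDeriv
  split_ifs with hx hy hy
  · exact le_rfl
  · exact sqrt_mul_le_shockBranchDeriv ha (not_le.1 hy)
  · exact absurd (hxy.trans hy) hx
  · exact monotoneOn_shockBranchDeriv ha (not_le.1 hx) (not_le.1 hy) hxy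

theorem convexOn_backwardAux (ha : 0 < a) : ConvexOn ℝ univ (backwardAux a) := by
  refine Monotone.convexOn_univ_of_deriv
    (fun x => (hasDerivAt_backwardAux ha x).differentiableAt) ?_
  rw [funext fun x => (hasDerivAt_backwardAux ha x).deriv]
  exact monotone_backwardAuxDeriv ha

end

section

variable {γ x : ℝ}

theorem shockPart_eq_sqrt_shockSq (hγ : 1 < γ) (hx : 0 < x) :
    shockPart γ x = √(shockSq (2 / (γ - 1)) x) := by
  have hγ' : γ - 1 ≠ 0 := (sub_pos.2 hγ).ne'
  have h1 : -(1 : ℝ) / ((γ - 1) / 2) = -(2 / (γ - 1)) := by field_simp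
  have h2 : γ / ((γ - 1) / 2) = 2 / (γ - 1) + 2 := by field_simp; ring
  rw [shockPart, shockSq, h1, h2, rpow_neg hx.le, rpow_add hx, rpow_two]

theorem kappa_eq_sqrt (hγ : 1 < γ) : kappa γ = √(2 / (γ - 1) * (2 / (γ - 1) + 2)) := by
  have hγ' : 0 < γ - 1 := sub_pos.2 hγ
  have h : 2 / (γ - 1) * (2 / (γ - 1) + 2) = (2 / (γ - 1)) ^ 2 * γ := by field_simp; ring
  rw [h, sqrt_mul (sq_nonneg _), sqrt_sq (by positivity), kappa]
  field_simp

theorem phiB_eq_backwardAux (hγ : 1 < γ) : phiB γ = backwardAux (2 / (γ - 1)) := by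
  ext x
  unfold phiB backwardAux
  split_ifs with hx
  · rw [kappa_eq_sqrt hγ]
  · exact shockPart_eq_sqrt_shockSq hγ (by linarith [not_le.1 hx])

theorem phiF_eq_neg_mul_phiB_inv (hγ : 1 < γ) (hx : 0 < x) : phiF γ x = -(x * phiB γ x⁻¹) := by
  rw [phiB_eq_backwardAux hγ]
  unfold phiF backwardAux
  split_ifs with h1 h2 h2
  · exact absurd h2 (not_le.2 ((one_lt_inv₀ hx).2 h1))
  · rw [shockPart_eq_sqrt_shockSq hγ hx, shockSq_inv hx, sqrt_div' _ (sq_nonneg x), sqrt_sq hx.le]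
    field_simp
  · rw [kappa_eq_sqrt hγ]
    field_simp
    ring
  · exact absurd (inv_le_one_of_one_le₀ (not_lt.1 h1)) h2

end

/-- φ← is convex on (0,∞) and φ→ is concave on (0,∞). -/
theorem phiB_convex_phiF_concave (γ : ℝ) (hγ : 1 < γ) :
    ConvexOn ℝ (Set.Ioi (0 : ℝ)) (phiB γ) ∧
    ConcaveOn ℝ (Set.Ioi (0 : ℝ)) (phiF γ) := by
  have ha : 0 < 2 / (γ - 1) := div_pos two_pos (sub_pos.2 hγ)
  have hB : ConvexOn ℝ (Ioi 0) (phiB γ) := by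
    rw [phiB_eq_backwardAux hγ]
    exact (convexOn_backwardAux ha).subset (subset_univ _) (convex_Ioi 0)
  exact ⟨hB, hB.mul_comp_inv.neg.congr fun x hx => (phiF_eq_neg_mul_phiB_inv hγ hx).symm⟩
end

section
/- The quantity x - (φ←(x) + κ(x+1))/(φ←'(x) + κ) tends to +∞ as x → +∞; in particular, for every real constant C there exists y > 1 with y - (φ←(y) + κ(y+1))/(φ←'(y) + κ) > C. -/
/-!
For `x > 1`, `φ←(x) = √((1 - x^q)(x^p - 1))` with `p = γ/α > 2` and `q = -1/α < 0`, so that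
`φ←(x) ~ x^{p/2}` and `x φ←'(x) ~ (p/2) x^{p/2}`, while `κ(x + 1) = o(x^{p/2})`. The quantity is
the Newton step `x - F x / F' x` for `F x = φ←(x) + κ(x + 1)`, and `F x / (x F' x) → 2/p`; hence it
equals `x (1 - 2/p + o(1)) = x (1/γ + o(1)) → ∞`.
-/

open Real Set Filter Topology

theorem tendsto_rpow_atTop_nhds_zero_of_neg {q : ℝ} (hq : q < 0) :
    Tendsto (fun x : ℝ => x ^ q) atTop (𝓝 0) := by
  simpa using tendsto_rpow_neg_atTop (neg_pos.2 hq)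

theorem tendsto_newton_step_atTop {F F' s : ℝ → ℝ} {a : ℝ} (ha : 1 < a)
    (hF : Tendsto (fun x => F x / s x) atTop (𝓝 1))
    (hF' : Tendsto (fun x => x * F' x / s x) atTop (𝓝 a))
    (hs : ∀ᶠ x in atTop, s x ≠ 0) :
    Tendsto (fun x => x - F x / F' x) atTop atTop := by
  have hlim : Tendsto (fun x => 1 - F x / s x / (x * F' x / s x)) atTop (𝓝 (1 - 1 / a)) :=
    tendsto_const_nhds.sub (hF.div hF' (by linarith))
  have hpos : 0 < 1 - 1 / a := by
    rw [sub_pos, div_lt_one (by linarith)]; exact ha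
  -- `x - F / F' = x * (1 - F / (x F'))` for `x ≠ 0`, even where `F' = 0`.
  refine (tendsto_id.atTop_mul_pos hpos hlim).congr' ?_
  filter_upwards [hs, eventually_gt_atTop 0] with x hsx hx
  rw [div_div_div_cancel_right₀ hsx, mul_sub, mul_one, id, ← mul_div_assoc,
    mul_div_mul_left _ _ hx.ne']

theorem tendsto_linear_div_rpow_atTop_nhds_zero {r : ℝ} (hr : 1 < r) (a b : ℝ) :
    Tendsto (fun x => (a * x + b) / x ^ r) atTop (𝓝 0) := by
  have h1 : Tendsto (fun x : ℝ => x ^ (-(r - 1))) atTop (𝓝 0) :=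
    tendsto_rpow_neg_atTop (by linarith)
  have h2 : Tendsto (fun x : ℝ => x ^ (-r)) atTop (𝓝 0) :=
    tendsto_rpow_neg_atTop (by linarith)
  have := (h1.const_mul a).add (h2.const_mul b)
  rw [mul_zero, mul_zero, add_zero] at this
  refine this.congr' ?_
  filter_upwards [eventually_gt_atTop 0] with x hx
  rw [rpow_neg hx.le, rpow_neg hx.le, rpow_sub_one hx.ne']
  field_simp

noncomputable def sqrtShock (p q x : ℝ) : ℝ := √((1 - x ^ q) * (x ^ p - 1))

section SqrtShock

variable {p q x : ℝ}

theorem sqrtShock_div_rpow_half (hx : 0 < x) :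
    sqrtShock p q x / x ^ (p / 2) = √((1 - x ^ q) * (1 - x ^ (-p))) := by
  have hs : 0 < x ^ (p / 2) := rpow_pos_of_pos hx _
  have hsq : x ^ p = x ^ (p / 2) * x ^ (p / 2) := by rw [← rpow_add hx]; ring_nf
  have hsplit : (1 - x ^ q) * (x ^ p - 1) =
      (x ^ (p / 2) * x ^ (p / 2)) * ((1 - x ^ q) * (1 - x ^ (-p))) := by
    rw [← hsq, rpow_neg hx.le]; field_simp
  rw [sqrtShock, hsplit, sqrt_mul (mul_self_nonneg _), sqrt_mul_self hs.le,
    mul_div_cancel_left₀ _ hs.ne']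

theorem tendsto_sqrtShock_div_rpow_half (hp : 0 < p) (hq : q < 0) :
    Tendsto (fun x => sqrtShock p q x / x ^ (p / 2)) atTop (𝓝 1) := by
  have hxq := tendsto_rpow_atTop_nhds_zero_of_neg hq
  have h := (((tendsto_const_nhds (x := (1 : ℝ))).sub hxq).mul
    ((tendsto_const_nhds (x := (1 : ℝ))).sub (tendsto_rpow_neg_atTop hp))).sqrt
  rw [sub_zero, mul_one, sqrt_one] at h
  refine h.congr' ?_
  filter_upwards [eventually_gt_atTop 0] with x hx
  rw [sqrtShock_div_rpow_half hx]

theorem sqrtShock_radicand_pos (hp : 0 < p) (hq : q < 0) (hx : 1 < x) :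
    0 < (1 - x ^ q) * (x ^ p - 1) :=
  mul_pos (sub_pos.2 (rpow_lt_one_of_one_lt_of_neg hx hq)) (sub_pos.2 (one_lt_rpow hx hp))

theorem hasDerivAt_sqrtShock (hp : 0 < p) (hq : q < 0) (hx : 1 < x) :
    HasDerivAt (sqrtShock p q)
      ((-(q * x ^ (q - 1)) * (x ^ p - 1) + (1 - x ^ q) * (p * x ^ (p - 1))) /
        (2 * sqrtShock p q x)) x := by
  have hx0 : x ≠ 0 := by positivity
  exact (((hasDerivAt_rpow_const (Or.inl hx0)).const_sub 1).mul
    ((hasDerivAt_rpow_const (Or.inl hx0)).sub_const 1)).sqrt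
    (sqrtShock_radicand_pos hp hq hx).ne'

theorem tendsto_mul_deriv_sqrtShock_div_rpow_half (hp : 0 < p) (hq : q < 0) :
    Tendsto (fun x => x * deriv (sqrtShock p q) x / x ^ (p / 2)) atTop (𝓝 (p / 2)) := by
  have hxq := tendsto_rpow_atTop_nhds_zero_of_neg hq
  have hxp := tendsto_rpow_neg_atTop hp
  have hnum :
      Tendsto (fun x => -(q * x ^ q) * (1 - x ^ (-p)) + (1 - x ^ q) * p) atTop (𝓝 p) := by
    have h := (((tendsto_const_nhds (x := q)).mul hxq).neg.mul
      ((tendsto_const_nhds (x := (1 : ℝ))).sub hxp)).add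
      (((tendsto_const_nhds (x := (1 : ℝ))).sub hxq).mul (tendsto_const_nhds (x := p)))
    simpa using h
  have h := hnum.div ((tendsto_sqrtShock_div_rpow_half hp hq).const_mul 2) (by norm_num)
  rw [mul_one] at h
  -- with `g` the radicand, `x φ' / x^{p/2} = (x g' / x^p) / (2 φ / x^{p/2})`
  refine h.congr' ?_
  filter_upwards [eventually_gt_atTop 1] with x hx
  have hx0 : 0 < x := by linarith
  have hs : 0 < x ^ (p / 2) := rpow_pos_of_pos hx0 _
  have hsq : x ^ p = x ^ (p / 2) * x ^ (p / 2) := by rw [← rpow_add hx0]; ring_nf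
  have hφ : 0 < sqrtShock p q x := sqrt_pos.2 (sqrtShock_radicand_pos hp hq hx)
  rw [Pi.div_apply, (hasDerivAt_sqrtShock hp hq hx).deriv, rpow_sub_one hx0.ne',
    rpow_sub_one hx0.ne', rpow_neg hx0.le, hsq]
  field_simp

theorem tendsto_newton_step_sqrtShock (hp : 2 < p) (hq : q < 0) (k : ℝ) :
    Tendsto (fun x => x - (sqrtShock p q x + k * (x + 1)) / (deriv (sqrtShock p q) x + k))
      atTop atTop := by
  have hp0 : 0 < p := by linarith
  have hr : 1 < p / 2 := by linarith
  refine tendsto_newton_step_atTop (s := fun x => x ^ (p / 2)) hr ?_ ?_ ?_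
  · have h := (tendsto_sqrtShock_div_rpow_half hp0 hq).add
      (tendsto_linear_div_rpow_atTop_nhds_zero hr k k)
    rw [add_zero] at h
    refine h.congr fun x => ?_
    ring
  · have h := (tendsto_mul_deriv_sqrtShock_div_rpow_half hp0 hq).add
      (tendsto_linear_div_rpow_atTop_nhds_zero hr k 0)
    rw [add_zero] at h
    refine h.congr fun x => ?_
    ring
  · filter_upwards [eventually_gt_atTop 0] with x hx
    exact (rpow_pos_of_pos hx _).ne'

end SqrtShock

theorem phiB_eq_sqrtShock {γ x : ℝ} (hx : 1 < x) :
    phiB γ x = sqrtShock (γ / ((γ - 1) / 2)) (-(1 : ℝ) / ((γ - 1) / 2)) x := by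
  rw [phiB, if_neg hx.not_ge, shockPart, sqrtShock]

/-- x - (φ←(x)+κ(x+1))/(φ←'(x)+κ) → +∞ as x → +∞; in particular,
    for every real C there is y > 1 where this quantity exceeds C. -/
theorem phiB_limit_quantity (γ : ℝ) (hγ : 1 < γ) :
    Filter.Tendsto
      (fun x : ℝ => x - (phiB γ x + kappa γ * (x + 1)) / (deriv (phiB γ) x + kappa γ))
      Filter.atTop Filter.atTop ∧
    ∀ C : ℝ, ∃ y : ℝ, 1 < y ∧
      C < y - (phiB γ y + kappa γ * (y + 1)) / (deriv (phiB γ) y + kappa γ) := by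
  have hα : 0 < (γ - 1) / 2 := by linarith
  have hp : 2 < γ / ((γ - 1) / 2) := by rw [lt_div_iff₀ hα]; linarith
  have hq : -(1 : ℝ) / ((γ - 1) / 2) < 0 := div_neg_of_neg_of_pos (by norm_num) hα
  have hT : Tendsto
      (fun x : ℝ => x - (phiB γ x + kappa γ * (x + 1)) / (deriv (phiB γ) x + kappa γ))
      atTop atTop := by
    refine (tendsto_newton_step_sqrtShock hp hq (kappa γ)).congr' ?_
    filter_upwards [eventually_gt_atTop 1] with x hx
    have hderiv : deriv (phiB γ) x = deriv (sqrtShock _ _) x :=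
      Filter.EventuallyEq.deriv_eq <| by
        filter_upwards [Ioi_mem_nhds hx] with y hy
        exact phiB_eq_sqrtShock hy
    rw [hderiv, phiB_eq_sqrtShock hx]
  refine ⟨hT, fun C => ?_⟩
  obtain ⟨y, hCy, hy⟩ := ((hT.eventually_gt_atTop C).and (eventually_gt_atTop 1)).exists
  exact ⟨y, hy, hCy⟩
end

section
/- For all x > 0 and y > 0 one has κ(1 + xy) + φ←(x) + x·φ←(y) > 0. (This is the statement that vacuum never forms in the Glimm resolution of any overtaking interaction of two backward waves in the isentropic p-system.) -/
open Real Set Filter Topology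

/-!
The shock branch of `φ←` lies above the line `κ (x - 1)` that continues its rarefaction branch,
so `φ← x ≥ κ (x - 1)` for every `x`, and then the expression is at least
`κ (1 + x y) + κ (x - 1) + x κ (y - 1) = 2 κ x y > 0`.

With `a = 1/α` one has `κ² = a (a + 2)`, and for `x = eᵗ` the shock inequality becomes
`c² (cosh t - 1) ≤ cosh (c t) - 1` with `c = a + 1 ≥ 1`; as `cosh t - 1 = 2 sinh² (t/2)`, this is
the superlinearity `c sinh s ≤ sinh (c s)` of `sinh` on `[0, ∞)`.
-/

namespace Real

theorem mul_sinh_le_sinh_mul {c u : ℝ} (hc : 1 ≤ c) (hu : 0 ≤ u) :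
    c * sinh u ≤ sinh (c * u) := by
  have hderiv (s : ℝ) : HasDerivAt (fun s ↦ sinh (c * s) - c * sinh s)
      (c * (cosh (c * s) - cosh s)) s :=
    (((hasDerivAt_id' s).const_mul c).sinh.sub ((hasDerivAt_sinh s).const_mul c)).congr_deriv
      (by ring)
  have hmono : MonotoneOn (fun s ↦ sinh (c * s) - c * sinh s) (Ici 0) := by
    refine monotoneOn_of_hasDerivWithinAt_nonneg (convex_Ici 0)
      (fun s _ ↦ (hderiv s).continuousAt.continuousWithinAt)
      (fun s _ ↦ (hderiv s).hasDerivWithinAt) fun s hs ↦ ?_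
    rw [interior_Ici, mem_Ioi] at hs
    have hcosh : cosh s ≤ cosh (c * s) := by
      rw [cosh_le_cosh, abs_of_pos hs, abs_of_pos (by positivity)]
      nlinarith
    exact mul_nonneg (by linarith) (sub_nonneg.2 hcosh)
  have hzero := hmono self_mem_Ici hu hu
  simp only [mul_zero, sinh_zero, sub_zero] at hzero
  linarith

theorem cosh_sub_one (u : ℝ) : cosh u - 1 = 2 * sinh (u / 2) ^ 2 := by
  have h := cosh_two_mul (u / 2)
  rw [mul_div_cancel₀ _ two_ne_zero] at h
  rw [h, cosh_sq]
  ring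

theorem sq_mul_cosh_sub_one_le {c : ℝ} (hc : 1 ≤ c) (u : ℝ) :
    c ^ 2 * (cosh u - 1) ≤ cosh (c * u) - 1 := by
  rw [← cosh_abs u, ← cosh_abs (c * u), abs_mul, abs_of_nonneg (by linarith : 0 ≤ c),
    cosh_sub_one, cosh_sub_one, mul_div_assoc]
  have hsinh : 0 ≤ c * sinh (|u| / 2) := by
    have := sinh_nonneg_iff.2 (by positivity : 0 ≤ |u| / 2)
    positivity
  calc c ^ 2 * (2 * sinh (|u| / 2) ^ 2) = 2 * (c * sinh (|u| / 2)) ^ 2 := by ring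
    _ ≤ 2 * sinh (c * (|u| / 2)) ^ 2 := by
      gcongr
      exact mul_sinh_le_sinh_mul hc (by positivity)

end Real

theorem mul_add_two_mul_sub_one_sq_le_rpow {a x : ℝ} (ha : 0 ≤ a) (hx : 0 < x) :
    a * (a + 2) * (x - 1) ^ 2 ≤ (1 - x ^ (-a)) * (x ^ (a + 2) - 1) := by
  obtain ⟨t, rfl⟩ : ∃ t, exp t = x := ⟨log x, exp_log hx⟩
  have key := sq_mul_cosh_sub_one_le (c := a + 1) (by linarith) t
  rw [← exp_mul, ← exp_mul]
  have hsq : (exp t - 1) ^ 2 = 2 * exp t * (cosh t - 1) := by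
    rw [cosh_eq, exp_neg]
    field_simp
    ring
  have hprod : (1 - exp (t * -a)) * (exp (t * (a + 2)) - 1) =
      2 * exp t * ((cosh ((a + 1) * t) - 1) - (cosh t - 1)) := by
    rw [cosh_eq, cosh_eq, show t * (a + 2) = (a + 1) * t + t by ring,
      show t * -a = -((a + 1) * t) + t by ring, exp_add, exp_add, exp_neg, exp_neg]
    field_simp
    ring
  rw [hsq, hprod]
  linear_combination (2 * exp t) * key

theorem kappa_pos {γ : ℝ} (hγ : 1 < γ) : 0 < kappa γ :=
  div_pos (sqrt_pos.2 (by linarith)) (by linarith)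

theorem kappa_sq {γ : ℝ} (hγ : 1 < γ) : kappa γ ^ 2 = 2 / (γ - 1) * (2 / (γ - 1) + 2) := by
  have hγ1 : γ - 1 ≠ 0 := by linarith
  rw [kappa, div_pow, sq_sqrt (by linarith)]
  field_simp
  ring

theorem kappa_mul_sub_one_le_shockPart {γ x : ℝ} (hγ : 1 < γ) (hx : 1 ≤ x) :
    kappa γ * (x - 1) ≤ shockPart γ x := by
  have hγ1 : γ - 1 ≠ 0 := by linarith
  have key := mul_add_two_mul_sub_one_sq_le_rpow (a := 2 / (γ - 1))
    (div_nonneg zero_le_two (by linarith)) (by linarith : 0 < x)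
  rw [← kappa_sq hγ, ← mul_pow, show -(2 / (γ - 1)) = -(1 : ℝ) / ((γ - 1) / 2) by field_simp,
    show 2 / (γ - 1) + 2 = γ / ((γ - 1) / 2) by field_simp; ring] at key
  exact le_sqrt_of_sq_le key

theorem kappa_mul_sub_one_le_phiB {γ : ℝ} (hγ : 1 < γ) (x : ℝ) :
    kappa γ * (x - 1) ≤ phiB γ x := by
  unfold phiB
  split_ifs with hx
  · exact le_rfl
  · exact kappa_mul_sub_one_le_shockPart hγ (not_le.1 hx).le

/-- vacuum never forms in overtaking interactions of backward waves:
    κ(1+xy) + φ←(x) + x·φ←(y) > 0 for all x, y > 0. -/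
theorem no_vacuum_overtaking (γ : ℝ) (hγ : 1 < γ) :
    ∀ x y : ℝ, 0 < x → 0 < y →
      0 < kappa γ * (1 + x * y) + phiB γ x + x * phiB γ y := by
  intro x y hx hy
  have hφx := kappa_mul_sub_one_le_phiB hγ x
  have hφy := mul_le_mul_of_nonneg_left (kappa_mul_sub_one_le_phiB hγ y) hx.le
  calc 0 < 2 * kappa γ * (x * y) := by have := kappa_pos hγ; positivity
    _ = kappa γ * (1 + x * y) + kappa γ * (x - 1) + x * (kappa γ * (y - 1)) := by ring
    _ ≤ kappa γ * (1 + x * y) + phiB γ x + x * phiB γ y := by gcongr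
end

section
/- Fix ξ̄ > 0 and ξ > 0. The map b ↦ ξ̄·φ←(b) + ξ·φ←(b ξ̄/ξ) is strictly increasing on (0,∞), tends to -κ(ξ̄ + ξ) as b → 0+ and to +∞ as b → +∞; consequently, for any real numbers ū and u with u - ū < κ(ξ + ξ̄) there exists a unique b > 0 with ξ̄·φ←(b) + ξ·φ←(b ξ̄/ξ) = ū - u. (This is well-posedness without vacuum of the Riemann problem for the isentropic p-system under the no-vacuum condition.) -/
open Real Set Filter Topology

/-!
`φ←` is continuous and strictly increasing on all of `ℝ`: linear below `1`, and above `1` a square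
root of a product of two nonnegative increasing factors, which tends to `∞`. Hence so is
`b ↦ ξbar φ←(b) + ξ φ←(b ξbar / ξ)`, whose value at `0` is `-κ (ξbar + ξ)`; the limit at `0+` is
continuity, and the unique `b` comes from the intermediate value theorem on `(0, ∞)`.
-/

namespace RiemannProblem

variable {γ : ℝ}

lemma kappa_pos (hγ : 1 < γ) : 0 < kappa γ :=
  div_pos (Real.sqrt_pos.2 (by linarith)) (by linarith)

lemma shockPart_one : shockPart γ 1 = 0 := by
  simp [shockPart]

lemma continuousOn_shockPart : ContinuousOn (shockPart γ) (Ioi 0) := by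
  have hrpow (p : ℝ) : ContinuousOn (fun x : ℝ => x ^ p) (Ioi 0) :=
    continuousOn_id.rpow_const fun x hx => Or.inl (ne_of_gt hx)
  exact ((continuousOn_const.sub (hrpow _)).mul ((hrpow _).sub continuousOn_const)).sqrt

lemma shockPart_strictMonoOn (hγ : 1 < γ) : StrictMonoOn (shockPart γ) (Ici 1) := by
  have hα : 0 < (γ - 1) / 2 := by linarith
  have hneg : -(1 : ℝ) / ((γ - 1) / 2) < 0 := div_neg_of_neg_of_pos (by norm_num) hα
  have hpos : 0 < γ / ((γ - 1) / 2) := by positivity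
  intro a (ha : 1 ≤ a) b (hb : 1 ≤ b) hab
  have hb1 : 1 < b := ha.trans_lt hab
  have hfirst : b ^ (-(1 : ℝ) / ((γ - 1) / 2)) ≤ a ^ (-(1 : ℝ) / ((γ - 1) / 2)) :=
    (Real.rpow_lt_rpow_of_neg (by linarith) hab hneg).le
  have hfirst_nonneg : 0 ≤ 1 - a ^ (-(1 : ℝ) / ((γ - 1) / 2)) :=
    sub_nonneg.2 (Real.rpow_le_one_of_one_le_of_nonpos ha hneg.le)
  have hfirst_pos : 0 < 1 - b ^ (-(1 : ℝ) / ((γ - 1) / 2)) :=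
    sub_pos.2 (Real.rpow_lt_one_of_one_lt_of_neg hb1 hneg)
  have hsecond : a ^ (γ / ((γ - 1) / 2)) < b ^ (γ / ((γ - 1) / 2)) :=
    Real.rpow_lt_rpow (by linarith) hab hpos
  have hsecond_nonneg : 0 ≤ a ^ (γ / ((γ - 1) / 2)) - 1 :=
    sub_nonneg.2 (Real.one_le_rpow ha hpos.le)
  exact Real.sqrt_lt_sqrt (mul_nonneg hfirst_nonneg hsecond_nonneg)
    (mul_lt_mul' (by linarith) (by linarith) hsecond_nonneg hfirst_pos)

lemma shockPart_pos (hγ : 1 < γ) {x : ℝ} (hx : 1 < x) : 0 < shockPart γ x :=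
  shockPart_one (γ := γ) ▸ shockPart_strictMonoOn hγ self_mem_Ici hx.le hx

lemma tendsto_shockPart_atTop (hγ : 1 < γ) : Tendsto (shockPart γ) atTop atTop := by
  have hα : 0 < (γ - 1) / 2 := by linarith
  have hfirst : Tendsto (fun x : ℝ => 1 - x ^ (-(1 : ℝ) / ((γ - 1) / 2))) atTop (𝓝 1) := by
    simpa [neg_div] using tendsto_const_nhds.sub (tendsto_rpow_neg_atTop (y := 1 / ((γ - 1) / 2))
      (by positivity))
  have hsecond : Tendsto (fun x : ℝ => x ^ (γ / ((γ - 1) / 2)) - 1) atTop atTop :=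
    (tendsto_rpow_atTop (by positivity)).atTop_add tendsto_const_nhds
  exact tendsto_sqrt_atTop.comp (hfirst.pos_mul_atTop one_pos hsecond)

lemma phiB_of_le_one {x : ℝ} (hx : x ≤ 1) : phiB γ x = kappa γ * (x - 1) := if_pos hx

lemma phiB_of_one_lt {x : ℝ} (hx : 1 < x) : phiB γ x = shockPart γ x := if_neg hx.not_ge

lemma continuous_phiB : Continuous (phiB γ) :=
  continuous_if_le continuous_id continuous_const (by fun_prop)
    (continuousOn_shockPart.mono fun x (hx : 1 ≤ x) => zero_lt_one.trans_le hx)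
    fun x (hx : x = 1) => by simp [hx, shockPart_one]

lemma strictMono_phiB (hγ : 1 < γ) : StrictMono (phiB γ) := by
  intro a b hab
  rcases le_or_gt b 1 with hb | hb
  · rw [phiB_of_le_one (hab.le.trans hb), phiB_of_le_one hb]
    nlinarith [kappa_pos hγ]
  rw [phiB_of_one_lt hb]
  rcases le_or_gt a 1 with ha | ha
  · rw [phiB_of_le_one ha]
    nlinarith [kappa_pos hγ, shockPart_pos hγ hb]
  · rw [phiB_of_one_lt ha]
    exact shockPart_strictMonoOn hγ ha.le (ha.trans hab).le hab

lemma tendsto_phiB_atTop (hγ : 1 < γ) : Tendsto (phiB γ) atTop atTop :=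
  (tendsto_shockPart_atTop hγ).congr' <|
    (eventually_gt_atTop 1).mono fun _ hx => (phiB_of_one_lt hx).symm

/-- The Riemann problem with left state `(ubar, ξbar)` and right state `(u, ξ)` is solved by the
backward `ξ`-ratio `b` with `riemannMap γ ξbar ξ b = ubar - u`. -/
noncomputable def riemannMap (γ ξbar ξ b : ℝ) : ℝ :=
  ξbar * phiB γ b + ξ * phiB γ (b * ξbar / ξ)

variable {ξbar ξ : ℝ}

lemma riemannMap_zero : riemannMap γ ξbar ξ 0 = -(kappa γ * (ξbar + ξ)) := by
  simp only [riemannMap, zero_mul, zero_div, phiB_of_le_one zero_le_one]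
  ring

lemma continuous_riemannMap : Continuous (riemannMap γ ξbar ξ) :=
  (continuous_const.mul continuous_phiB).add
    (continuous_const.mul (continuous_phiB.comp (by fun_prop)))

lemma strictMono_riemannMap (hγ : 1 < γ) (hξbar : 0 < ξbar) (hξ : 0 < ξ) :
    StrictMono (riemannMap γ ξbar ξ) := by
  have hscale : StrictMono fun b : ℝ => b * ξbar / ξ := fun a b hab => by dsimp only; gcongr
  exact ((strictMono_phiB hγ).const_mul hξbar).add
    (((strictMono_phiB hγ).comp hscale).const_mul hξ)

lemma tendsto_riemannMap_atTop (hγ : 1 < γ) (hξbar : 0 < ξbar) (hξ : 0 < ξ) :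
    Tendsto (riemannMap γ ξbar ξ) atTop atTop := by
  have hscale : Tendsto (fun b : ℝ => b * ξbar / ξ) atTop atTop :=
    (tendsto_id.atTop_mul_const hξbar).atTop_div_const hξ
  exact ((tendsto_phiB_atTop hγ).const_mul_atTop hξbar).atTop_add_atTop
    (((tendsto_phiB_atTop hγ).comp hscale).const_mul_atTop hξ)

end RiemannProblem

open RiemannProblem in
/-- the map b ↦ ξ̄·φ←(b) + ξ·φ←(bξ̄/ξ) is strictly increasing on (0,∞),
    tends to -κ(ξ̄+ξ) as b → 0+ and to +∞ as b → +∞; consequently, under the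
    no-vacuum condition u - ū < κ(ξ + ξ̄) the Riemann problem has a unique
    backward ξ-ratio b > 0. -/
theorem riemann_problem_wellposed (γ : ℝ) (hγ : 1 < γ)
    (ξbar ξ : ℝ) (hξbar : 0 < ξbar) (hξ : 0 < ξ) :
    StrictMonoOn (fun b : ℝ => ξbar * phiB γ b + ξ * phiB γ (b * ξbar / ξ))
      (Set.Ioi (0 : ℝ)) ∧
    Filter.Tendsto (fun b : ℝ => ξbar * phiB γ b + ξ * phiB γ (b * ξbar / ξ))
      (nhdsWithin 0 (Set.Ioi 0)) (nhds (-(kappa γ * (ξbar + ξ)))) ∧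
    Filter.Tendsto (fun b : ℝ => ξbar * phiB γ b + ξ * phiB γ (b * ξbar / ξ))
      Filter.atTop Filter.atTop ∧
    ∀ ubar u : ℝ, u - ubar < kappa γ * (ξ + ξbar) →
      ∃! b : ℝ, 0 < b ∧ ξbar * phiB γ b + ξ * phiB γ (b * ξbar / ξ) = ubar - u := by
  have hmono := strictMono_riemannMap hγ hξbar hξ
  have hcont : Continuous (riemannMap γ ξbar ξ) := continuous_riemannMap
  have htop := tendsto_riemannMap_atTop hγ hξbar hξ
  refine ⟨hmono.strictMonoOn _, ?_, htop, fun ubar u hu => ?_⟩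
  · rw [← riemannMap_zero]
    exact hcont.continuousWithinAt.tendsto
  · have hbelow : riemannMap γ ξbar ξ 0 < ubar - u := by
      rw [riemannMap_zero]
      linarith
    obtain ⟨b, hb, hfb⟩ := intermediate_value_Ioi hcont.continuousOn htop hbelow
    exact ⟨b, ⟨hb, hfb⟩, fun b' hb' => hmono.injective (hb'.2.trans hfb.symm)⟩
end

section
/- Let 0 < b < 1 and f > 1 (the ξ-ratios of an incoming backward rarefaction and an incoming forward rarefaction in a head-on interaction). Then the no-vacuum condition φ←(b) + κb > (φ→(f) - κ)/f holds if and only if b + 1/f > 1. -/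
open Real Set Filter Topology

/-- for two incoming rarefactions (0 < b < 1, f > 1) the no-vacuum
    condition is equivalent to b + 1/f > 1. -/
theorem no_vacuum_RR_iff (γ : ℝ) (hγ : 1 < γ)
    (b f : ℝ) (hb0 : 0 < b) (hb1 : b < 1) (hf : 1 < f) :
    ((phiF γ f - kappa γ) / f < phiB γ b + kappa γ * b) ↔ 1 < b + 1 / f := by
  have hf0 : (0:ℝ) < f := lt_trans one_pos hf
  have hκ : 0 < kappa γ := by
    unfold kappa
    exact div_pos (Real.sqrt_pos.mpr (lt_trans one_pos hγ)) (by linarith)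
  rw [phiB, phiF, if_pos hb1.le, if_neg (not_lt.mpr hf.le), div_lt_iff₀ hf0]
  have hinv : 1 / f * f = 1 := one_div_mul_cancel hf0.ne'
  have key : (kappa γ * (f - 1) - kappa γ < (kappa γ * (b - 1) + kappa γ * b) * f) ↔
      f - 2 < (2 * b - 1) * f := by
    rw [show kappa γ * (f - 1) - kappa γ = kappa γ * (f - 2) by ring,
        show (kappa γ * (b - 1) + kappa γ * b) * f = kappa γ * ((2 * b - 1) * f) by ring]
    exact mul_lt_mul_iff_right₀ hκ
  rw [key]
  constructor
  · intro h
    nlinarith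
  · intro h
    nlinarith
end
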